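/- Let p, q, r ∈ ℝ², set m = q − p, and assume det(q, m) > 0, det(r − p, m) < 0 and det(r, m) < 0, where det(x, y) = x₁y₂ − x₂y₁. Let A(z) = z + (det(z, p − q)/det(q, p − q))·(p − q) be the shear map sending q to p and fixing pointwise the line through the origin parallel to m (note det(q, p − q) ≠ 0 under the hypotheses). Let Δ(T) be the area of the triangle with vertices p, q, r and Δ(T′) the area of the triangle with vertices p, A(r), r, where the area of a triangle with vertices x, y, z is |det(y − x, z − x)|/2. Then Δ(T′) < Δ(T) if and only if det(m, r + q) < 0. -/

import Mathlib

/-- The standard 2×2 determinant on `ℝ × ℝ`. -/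
noncomputable def det2 (x y : ℝ × ℝ) : ℝ := x.1 * y.2 - x.2 * y.1

/-- The shear map `A_{uv}(x) = x + (det(x, v−u)/det(u, v−u)) • (v−u)`. -/
noncomputable def shear (u v : ℝ × ℝ) (x : ℝ × ℝ) : ℝ × ℝ :=
  x + (det2 x (v - u) / det2 u (v - u)) • (v - u)

/-- The area `|det(y−x, z−x)|/2` of the triangle with vertices `x, y, z`. -/
noncomputable def tri (x y z : ℝ × ℝ) : ℝ := |det2 (y - x) (z - x)| / 2

/-!
The shear `A = A_{q,p}` moves `r` by the multiple `-(det(r, m)/det(q, m)) • m` of `m = q - p`,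
so the triangle `p, A(r), r` has area `|det(r, m)/det(q, m)|` times that of `p, q, r`.
As `det(r, m) < 0 < det(q, m)`, this ratio is below `1` exactly when `det(r + q, m) > 0`.
-/

theorem det2_comm (x y : ℝ × ℝ) : det2 y x = -det2 x y := by
  unfold det2; ring

theorem det2_neg_left (x y : ℝ × ℝ) : det2 (-x) y = -det2 x y := by
  simp only [det2, Prod.fst_neg, Prod.snd_neg]; ring

theorem det2_neg_right (x y : ℝ × ℝ) : det2 x (-y) = -det2 x y := by
  rw [det2_comm, det2_neg_left, det2_comm y x, neg_neg]

theorem det2_add_left (x y z : ℝ × ℝ) : det2 (x + y) z = det2 x z + det2 y z := by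
  simp only [det2, Prod.fst_add, Prod.snd_add]; ring

theorem det2_smul_left (a : ℝ) (x y : ℝ × ℝ) : det2 (a • x) y = a * det2 x y := by
  simp only [det2, Prod.smul_fst, Prod.smul_snd, smul_eq_mul]; ring

theorem det2_self (x : ℝ × ℝ) : det2 x x = 0 := by
  unfold det2; ring

theorem det2_shear_sub (u v x y : ℝ × ℝ) :
    det2 (shear u v x - y) (x - y) =
      det2 x (v - u) / det2 u (v - u) * det2 (v - u) (x - y) := by
  rw [shear, add_sub_right_comm, det2_add_left, det2_self, det2_smul_left, zero_add]

theorem tri_shear (u v x : ℝ × ℝ) :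
    tri v (shear u v x) x = |det2 x (v - u) / det2 u (v - u)| * tri v u x := by
  rw [tri, tri, det2_shear_sub, abs_mul, mul_div_assoc, ← neg_sub u v, det2_neg_left, abs_neg]

/-- with `m = q − p`, `det(q, m) > 0`, `det(r − p, m) < 0`,
`det(r, m) < 0`, and `A = A_{q,p}` the shear sending `q` to `p` and fixing the line
through the origin parallel to `m`, the area of the triangle `p, A(r), r` is smaller
than the area of the triangle `p, q, r` if and only if `det(m, r + q) < 0`. -/
theorem stmt_19 (p q r m : ℝ × ℝ) (hm : m = q - p)
    (h1 : 0 < det2 q m) (h2 : det2 (r - p) m < 0) (h3 : det2 r m < 0) :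
    tri p (shear q p r) r < tri p q r ↔ det2 m (r + q) < 0 := by
  subst hm
  have harea : 0 < tri p q r := by
    rw [tri, det2_comm]
    exact div_pos (abs_pos.mpr (neg_ne_zero.mpr h2.ne)) two_pos
  have hratio : det2 r (p - q) / det2 q (p - q) = det2 r (q - p) / det2 q (q - p) := by
    rw [← neg_sub q p, det2_neg_right, det2_neg_right, neg_div_neg_eq]
  rw [tri_shear, mul_lt_iff_lt_one_left harea, hratio, abs_div, abs_of_pos h1, abs_of_neg h3,
    div_lt_one h1, det2_comm (r + q), det2_add_left]
  constructor <;> intro h <;> linarith
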